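/- arXiv:1305.5955 — 2 statements merged into one kernel-verified Lean document; each statement's English description precedes it below -/
import Mathlib

section
/- Let (G,p) be an r-dimensional bar framework on n vertices in ℝ^r with r ≤ n−2. Suppose (1) (G,p) has a positive semidefinite stress matrix Ω with rank n−r−1, and (2) for each vertex i, the set {p^i} ∪ {p^j : j ∈ N(i)} affinely spans ℝ^r, where N(i) = {j : {i,j} ∈ E} is the set of neighbors of i. Then (G,p) is universally rigid. -/
open Matrix BigOperators

noncomputable section

/-- Squared Euclidean distance between two points of `ℝ^r`. -/
def sqDist {r : ℕ} (x y : Fin r → ℝ) : ℝ := ∑ k, (x k - y k) ^ 2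

/-- `(G,q)` is dominated by `(G,p)`, where the edges of `G` are partitioned into
bars `B`, cables `C` and struts `S`. -/
def Dominates {n r s : ℕ} (B C S : Set (Fin n × Fin n))
    (p : Fin n → Fin r → ℝ) (q : Fin n → Fin s → ℝ) : Prop :=
  (∀ e ∈ B, sqDist (q e.1) (q e.2) = sqDist (p e.1) (p e.2)) ∧
  (∀ e ∈ C, sqDist (q e.1) (q e.2) ≤ sqDist (p e.1) (p e.2)) ∧
  (∀ e ∈ S, sqDist (p e.1) (p e.2) ≤ sqDist (q e.1) (q e.2))

/-- `(G,q)` is congruent to `(G,p)`. -/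
def FrameworkCongruent {n r s : ℕ} (p : Fin n → Fin r → ℝ) (q : Fin n → Fin s → ℝ) : Prop :=
  ∀ i j, sqDist (q i) (q j) = sqDist (p i) (p j)

/-- `(G,p)` is universally rigid: every framework `(G,q)` in any dimension `s`
dominated by `(G,p)` is congruent to `(G,p)`. -/
def UniversallyRigid {n r : ℕ} (B C S : Set (Fin n × Fin n))
    (p : Fin n → Fin r → ℝ) : Prop :=
  ∀ (s : ℕ) (q : Fin n → Fin s → ℝ), Dominates B C S p q → FrameworkCongruent p q

/-- `(G,q)` is affinely-dominated by `(G,p)`: dominated and `q^i = A p^i + b`. -/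
def AffinelyDominated {n r : ℕ} (B C S : Set (Fin n × Fin n))
    (p q : Fin n → Fin r → ℝ) : Prop :=
  Dominates B C S p q ∧
  ∃ (A : Matrix (Fin r) (Fin r) ℝ) (b : Fin r → ℝ), ∀ i, q i = A.mulVec (p i) + b

/-- `ω` is an equilibrium stress of the framework with edge set `E` and configuration `p`. -/
def IsStress {n r : ℕ} (E : Set (Fin n × Fin n)) (p : Fin n → Fin r → ℝ)
    (ω : Fin n → Fin n → ℝ) : Prop :=
  (∀ i j, ω i j = ω j i) ∧ (∀ i j, (i, j) ∉ E → ω i j = 0) ∧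
  (∀ i : Fin n, ∑ j, ω i j • (p i - p j) = 0)

/-- A stress is proper if `ω_ij ≥ 0` on cables and `ω_ij ≤ 0` on struts. -/
def IsProperStress {n : ℕ} (C S : Set (Fin n × Fin n)) (ω : Fin n → Fin n → ℝ) : Prop :=
  (∀ e ∈ C, 0 ≤ ω e.1 e.2) ∧ (∀ e ∈ S, ω e.1 e.2 ≤ 0)

/-- The stress matrix `Ω` associated to the stress `ω`. -/
def stressMatrix {n : ℕ} (ω : Fin n → Fin n → ℝ) : Matrix (Fin n) (Fin n) ℝ :=
  Matrix.of fun i j => if i = j then ∑ k, ω i k else -ω i j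

/-- `B`, `C`, `S` are the (symmetrically encoded) bars, cables and struts of a
simple connected tensegrity graph on `{1,…,n}`. -/
def TensegrityGraph {n : ℕ} (B C S : Set (Fin n × Fin n)) : Prop :=
  (∀ i j, (i, j) ∈ B → (j, i) ∈ B) ∧ (∀ i j, (i, j) ∈ C → (j, i) ∈ C) ∧
  (∀ i j, (i, j) ∈ S → (j, i) ∈ S) ∧ (∀ i : Fin n, (i, i) ∉ B ∪ C ∪ S) ∧
  B ∩ C = ∅ ∧ B ∩ S = ∅ ∧ C ∩ S = ∅ ∧
  (SimpleGraph.fromRel fun i j => (i, j) ∈ B ∪ C ∪ S).Connected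

/-- A set of points of `ℝ^r` is in general position if every `r+1` of them are
affinely independent. -/
def SetInGeneralPosition {r : ℕ} (A : Set (Fin r → ℝ)) : Prop :=
  ∀ T : Finset (Fin r → ℝ), ↑T ⊆ A → T.card = r + 1 →
    AffineIndependent ℝ (fun x : {x // x ∈ T} => (x : Fin r → ℝ))

/-- `Z` is a Gale matrix of the configuration with matrix `P`: its columns form a
basis of the null space of the matrix obtained by stacking `Pᵀ` on top of `eᵀ`. -/
def IsGaleMatrix {n r m : ℕ} (P : Matrix (Fin n) (Fin r) ℝ)
    (Z : Matrix (Fin n) (Fin m) ℝ) : Prop :=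
  (∀ k, Pᵀ *ᵥ (fun i => Z i k) = 0) ∧ (∀ k, ∑ i, Z i k = 0) ∧
  LinearIndependent ℝ (fun k i => Z i k) ∧
  ∀ v : Fin n → ℝ, Pᵀ *ᵥ v = 0 → ∑ i, v i = 0 →
    v ∈ Submodule.span ℝ (Set.range fun k i => Z i k)

/-- `Ω` is a stress matrix of the framework with edge set `E` and configuration
matrix `P` (with centroid at the origin): it is symmetric, vanishes on missing
edges, and satisfies `Pᵀ Ω = 0` and `Ω e = 0`. -/
def IsStressMatrix {n r : ℕ} (E : Set (Fin n × Fin n)) (P : Matrix (Fin n) (Fin r) ℝ)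
    (Ω : Matrix (Fin n) (Fin n) ℝ) : Prop :=
  Ω.IsSymm ∧ (∀ i j, i ≠ j → (i, j) ∉ E → Ω i j = 0) ∧
  Pᵀ * Ω = 0 ∧ Ω *ᵥ (fun _ => (1 : ℝ)) = 0

/-- The matrix `F^{ij} = (e^i - e^j)(e^i - e^j)ᵀ`. -/
def Fmat {n : ℕ} (i j : Fin n) : Matrix (Fin n) (Fin n) ℝ :=
  Matrix.vecMulVec (Pi.single i 1 - Pi.single j 1) (Pi.single i 1 - Pi.single j 1)

/-- The matrix `E^{ij} = e^i (e^j)ᵀ + e^j (e^i)ᵀ`. -/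
def Emat {n : ℕ} (i j : Fin n) : Matrix (Fin n) (Fin n) ℝ :=
  Matrix.vecMulVec (Pi.single i 1) (Pi.single j 1) +
    Matrix.vecMulVec (Pi.single j 1) (Pi.single i 1)

/-- The matrix `L^i = e^i eᵀ + e (e^i)ᵀ`. -/
def Lmat {n : ℕ} (i : Fin n) : Matrix (Fin n) (Fin n) ℝ :=
  Matrix.vecMulVec (Pi.single i 1) (fun _ => 1) +
    Matrix.vecMulVec (fun _ => 1) (Pi.single i 1)

/-- `ℰ(y) = Σ y_ij E^{ij}` (for `y` supported on the relevant pairs `i < j`). -/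
def EscrY {n : ℕ} (y : Fin n → Fin n → ℝ) : Matrix (Fin n) (Fin n) ℝ :=
  ∑ i, ∑ j, y i j • Emat i j

/-- The vector `x = -(1/n) ℰ(y) e + (1/(2n²)) (eᵀ ℰ(y) e) e`. -/
def xvec {n : ℕ} (y : Fin n → Fin n → ℝ) : Fin n → ℝ :=
  (-(1 / (n : ℝ))) • (EscrY y *ᵥ fun _ => (1 : ℝ)) +
    ((1 / (2 * (n : ℝ) ^ 2)) * ((fun _ => (1 : ℝ)) ⬝ᵥ (EscrY y *ᵥ fun _ => (1 : ℝ)))) •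
      (fun _ : Fin n => (1 : ℝ))

/-!
Because `Ω` is positive semidefinite and `q` has the same stress energy `∑ ωᵢⱼ ‖qⁱ - qʲ‖²` as `p`,
namely `0`, every coordinate vector of `q` lies in `ker Ω`. The rank condition makes `ker Ω` exactly
the space of affine functions of `p`, so `qⁱ = T pⁱ + b`. Put `W = TᵀT - 1`: it is isotropic on the
edge vectors `pⁱ - pʲ`, so the quadratic function `hᵢ = pⁱ ⬝ W pⁱ` has linear increments
`2 W pⁱ ⬝ (pʲ - pⁱ)` along the edges at `i` and is therefore also in `ker Ω`; hence
`hᵢ = c ⬝ pⁱ + d`. Comparing increments along the edges at `i`, which affinely span, gives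
`2 W pⁱ = c` for every `i`, so `W (pⁱ - pʲ) = 0` and all distances are preserved.
-/

lemma eq_zero_of_forall_dotProduct_sub_eq_zero {r : ℕ} {S : Set (Fin r → ℝ)}
    (hS : affineSpan ℝ S = ⊤) {a d : Fin r → ℝ} (ha : a ∈ S)
    (hd : ∀ x ∈ S, d ⬝ᵥ (x - a) = 0) : d = 0 := by
  have hspan : Submodule.span ℝ ((· -ᵥ a) '' S) = ⊤ := by
    rw [← vectorSpan_eq_span_vsub_set_right ℝ ha, ← direction_affineSpan, hS,
      AffineSubspace.direction_top]
  have hd' : ∀ v ∈ Submodule.span ℝ ((· -ᵥ a) '' S), d ⬝ᵥ v = 0 := by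
    intro v hv
    induction hv using Submodule.span_induction with
    | mem v hv =>
      obtain ⟨x, hx, rfl⟩ := hv
      exact hd x hx
    | zero => exact dotProduct_zero d
    | add u v _ _ hu hv => rw [dotProduct_add, hu, hv, add_zero]
    | smul c v _ hv => rw [dotProduct_smul, hv, smul_zero]
  exact dotProduct_self_eq_zero.1 (hd' d (hspan ▸ Submodule.mem_top))

lemma sqDist_eq_dotProduct {r : ℕ} (x y : Fin r → ℝ) : sqDist x y = (x - y) ⬝ᵥ (x - y) := by
  simp [sqDist, dotProduct, sq]

lemma sqDist_mulVec_add {r s : ℕ} (T : Matrix (Fin s) (Fin r) ℝ) (b : Fin s → ℝ)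
    (x y : Fin r → ℝ) :
    sqDist (T *ᵥ x + b) (T *ᵥ y + b) = sqDist x y + (x - y) ⬝ᵥ (Tᵀ * T - 1) *ᵥ (x - y) := by
  have hsub : T *ᵥ x + b - (T *ᵥ y + b) = T *ᵥ (x - y) := by rw [mulVec_sub]; abel
  have hT (u : Fin r → ℝ) : u ⬝ᵥ Tᵀ *ᵥ (T *ᵥ u) = T *ᵥ u ⬝ᵥ T *ᵥ u := by
    rw [dotProduct_mulVec, vecMul_transpose]
  rw [sqDist_eq_dotProduct, sqDist_eq_dotProduct, hsub, sub_mulVec, one_mulVec, ← mulVec_mulVec,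
    dotProduct_sub (x - y) (Tᵀ *ᵥ _), hT]
  ring

lemma dotProduct_mulVec_sub_of_isSymm {r : ℕ} {W : Matrix (Fin r) (Fin r) ℝ} (hW : W.IsSymm)
    {x y : Fin r → ℝ} (h : (x - y) ⬝ᵥ W *ᵥ (x - y) = 0) :
    y ⬝ᵥ W *ᵥ y - x ⬝ᵥ W *ᵥ x = 2 * ((W *ᵥ x) ⬝ᵥ (y - x)) := by
  have hxy : y ⬝ᵥ W *ᵥ x = x ⬝ᵥ W *ᵥ y := by
    rw [dotProduct_mulVec, ← mulVec_transpose, hW.eq, dotProduct_comm]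
  simp only [mulVec_sub, dotProduct_sub, sub_dotProduct] at h ⊢
  rw [dotProduct_comm (W *ᵥ x) y, dotProduct_comm (W *ᵥ x) x]
  linarith

lemma mulVec_eq_zero_of_sum_dotProduct_mulVec_eq_zero {n m : ℕ} {M : Matrix (Fin n) (Fin n) ℝ}
    (hM : M.PosSemidef) (x : Fin m → Fin n → ℝ) (h : ∑ k, x k ⬝ᵥ M *ᵥ x k = 0) (k : Fin m) :
    M *ᵥ x k = 0 := by
  have hnonneg (k : Fin m) : 0 ≤ x k ⬝ᵥ M *ᵥ x k := by
    simpa using hM.dotProduct_mulVec_nonneg (x k)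
  have hk := (Finset.sum_eq_zero_iff_of_nonneg fun k _ => hnonneg k).1 h k (Finset.mem_univ k)
  exact (hM.dotProduct_mulVec_zero_iff (x k)).1 (by simpa using hk)

def affineEval {n r : ℕ} (p : Fin n → Fin r → ℝ) : ((Fin r → ℝ) × ℝ) →ₗ[ℝ] (Fin n → ℝ) where
  toFun ac i := ac.1 ⬝ᵥ p i + ac.2
  map_add' _ _ := by ext; simp only [Prod.fst_add, Prod.snd_add, add_dotProduct, Pi.add_apply]; ring
  map_smul' _ _ := by ext; simp [smul_dotProduct]; ring

lemma affineEval_apply {n r : ℕ} (p : Fin n → Fin r → ℝ) (ac : (Fin r → ℝ) × ℝ) (i : Fin n) :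
    affineEval p ac i = ac.1 ⬝ᵥ p i + ac.2 := rfl

lemma affineEval_injective {n r : ℕ} {p : Fin n → Fin r → ℝ}
    (hdim : affineSpan ℝ (Set.range p) = ⊤) : Function.Injective (affineEval p) := by
  rw [← LinearMap.ker_eq_bot, LinearMap.ker_eq_bot']
  rintro ⟨a, c⟩ hac
  have hval (i : Fin n) : a ⬝ᵥ p i + c = 0 := congrFun hac i
  obtain ⟨i₀⟩ : Nonempty (Fin n) := by
    by_contra h
    rw [not_nonempty_iff] at h
    rw [Set.range_eq_empty, AffineSubspace.span_empty] at hdim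
    exact AffineSubspace.bot_ne_top ℝ _ _ hdim
  have ha : a = 0 := by
    refine eq_zero_of_forall_dotProduct_sub_eq_zero hdim (Set.mem_range_self i₀) ?_
    rintro _ ⟨i, rfl⟩
    rw [dotProduct_sub]
    linarith [hval i, hval i₀]
  subst ha
  simpa using hval i₀

lemma ker_mulVecLin_eq_range_affineEval {n r : ℕ} {p : Fin n → Fin r → ℝ}
    {M : Matrix (Fin n) (Fin n) ℝ} (hdim : affineSpan ℝ (Set.range p) = ⊤)
    (hrank : M.rank = n - r - 1)
    (hle : LinearMap.range (affineEval p) ≤ LinearMap.ker M.mulVecLin) :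
    LinearMap.ker M.mulVecLin = LinearMap.range (affineEval p) := by
  have hrange : Module.finrank ℝ (LinearMap.range (affineEval p)) = r + 1 := by
    rw [LinearMap.finrank_range_of_inj (affineEval_injective hdim), Module.finrank_prod,
      Module.finrank_fin_fun, Module.finrank_self]
  have hrn : r + 1 ≤ n := by
    simpa [hrange] using Submodule.finrank_le (LinearMap.range (affineEval p))
  have hker := LinearMap.finrank_range_add_finrank_ker M.mulVecLin
  rw [Module.finrank_fin_fun] at hker
  refine (Submodule.eq_of_le_of_finrank_eq hle ?_).symm
  rw [hrange]
  change M.rank + _ = n at hker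
  omega

section Stress

variable {n r : ℕ} {ω : Fin n → Fin n → ℝ} {p : Fin n → Fin r → ℝ}

def stressEnergy {m : ℕ} (ω : Fin n → Fin n → ℝ) (x : Fin n → Fin m → ℝ) : ℝ :=
  ∑ i, ∑ j, ω i j * sqDist (x i) (x j)

lemma stressMatrix_mulVec_apply (hdiag : ∀ i, ω i i = 0) (v : Fin n → ℝ) (i : Fin n) :
    (stressMatrix ω *ᵥ v) i = ∑ j, ω i j * (v i - v j) := by
  have hrow : ∀ j, stressMatrix ω i j * v j =
      (if i = j then (∑ k, ω i k) * v i else 0) - ω i j * v j := by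
    intro j
    by_cases h : i = j
    · subst h; simp [stressMatrix, hdiag]
    · simp [stressMatrix, h]
  simp only [mulVec, dotProduct, hrow, Finset.sum_sub_distrib, Finset.sum_ite_eq,
    Finset.mem_univ, if_true, Finset.sum_mul, mul_sub]

lemma two_mul_dotProduct_stressMatrix_mulVec (hsymm : ∀ i j, ω i j = ω j i)
    (hdiag : ∀ i, ω i i = 0) (v : Fin n → ℝ) :
    2 * (v ⬝ᵥ stressMatrix ω *ᵥ v) = ∑ i, ∑ j, ω i j * (v i - v j) ^ 2 := by
  have hswap : ∑ i, ∑ j, ω i j * v j * (v i - v j) = -∑ i, ∑ j, ω i j * v i * (v i - v j) := by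
    rw [Finset.sum_comm, ← Finset.sum_neg_distrib]
    refine Finset.sum_congr rfl fun i _ => ?_
    rw [← Finset.sum_neg_distrib]
    refine Finset.sum_congr rfl fun j _ => ?_
    rw [hsymm j i]
    ring
  have hsq : ∑ i, ∑ j, ω i j * (v i - v j) ^ 2 =
      ∑ i, ∑ j, ω i j * v i * (v i - v j) - ∑ i, ∑ j, ω i j * v j * (v i - v j) := by
    simp only [← Finset.sum_sub_distrib]
    exact Finset.sum_congr rfl fun i _ => Finset.sum_congr rfl fun j _ => by ring
  rw [hsq, hswap, sub_neg_eq_add, ← two_mul]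
  simp only [dotProduct, stressMatrix_mulVec_apply hdiag, Finset.mul_sum]
  exact Finset.sum_congr rfl fun i _ => Finset.sum_congr rfl fun j _ => by ring

lemma stressEnergy_eq_sum_dotProduct (hsymm : ∀ i j, ω i j = ω j i) (hdiag : ∀ i, ω i i = 0)
    {m : ℕ} (x : Fin n → Fin m → ℝ) :
    stressEnergy ω x = ∑ k, 2 * ((fun i => x i k) ⬝ᵥ stressMatrix ω *ᵥ fun i => x i k) := by
  simp only [two_mul_dotProduct_stressMatrix_mulVec hsymm hdiag, stressEnergy, sqDist,
    Finset.mul_sum]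
  exact (Finset.sum_congr rfl fun i _ => Finset.sum_comm).trans Finset.sum_comm

lemma stressMatrix_mulVec_affineEval (hdiag : ∀ i, ω i i = 0)
    (heq : ∀ i, ∑ j, ω i j • (p i - p j) = 0) (ac : (Fin r → ℝ) × ℝ) :
    stressMatrix ω *ᵥ affineEval p ac = 0 := by
  funext i
  have hterm (j : Fin n) : ω i j * (affineEval p ac i - affineEval p ac j) =
      ac.1 ⬝ᵥ (ω i j • (p i - p j)) := by
    rw [affineEval_apply, affineEval_apply, dotProduct_smul, dotProduct_sub, smul_eq_mul]
    ring
  rw [stressMatrix_mulVec_apply hdiag, Finset.sum_congr rfl fun j _ => hterm j, ← dotProduct_sum,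
    heq i, dotProduct_zero, Pi.zero_apply]

lemma stressEnergy_eq_zero (hsymm : ∀ i j, ω i j = ω j i) (hdiag : ∀ i, ω i i = 0)
    (heq : ∀ i, ∑ j, ω i j • (p i - p j) = 0) : stressEnergy ω p = 0 := by
  rw [stressEnergy_eq_sum_dotProduct hsymm hdiag]
  refine Finset.sum_eq_zero fun k _ => ?_
  have hcol : (fun i => p i k) = affineEval p (Pi.single k 1, 0) := by
    funext i
    simp [affineEval_apply]
  rw [hcol, stressMatrix_mulVec_affineEval hdiag heq, dotProduct_zero, mul_zero]

lemma stressEnergy_congr {m s : ℕ} {E : Set (Fin n × Fin n)}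
    (hsupp : ∀ i j, (i, j) ∉ E → ω i j = 0) {x : Fin n → Fin m → ℝ} {y : Fin n → Fin s → ℝ}
    (h : ∀ e ∈ E, sqDist (y e.1) (y e.2) = sqDist (x e.1) (x e.2)) :
    stressEnergy ω y = stressEnergy ω x := by
  refine Finset.sum_congr rfl fun i _ => Finset.sum_congr rfl fun j _ => ?_
  by_cases hE : (i, j) ∈ E
  · rw [h (i, j) hE]
  · rw [hsupp i j hE, zero_mul, zero_mul]

lemma exists_eq_mulVec_add_of_stressEnergy_eq_zero {s : ℕ} (hsymm : ∀ i j, ω i j = ω j i)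
    (hdiag : ∀ i, ω i i = 0) (hpsd : (stressMatrix ω).PosSemidef)
    (hker : LinearMap.ker (stressMatrix ω).mulVecLin ≤ LinearMap.range (affineEval p))
    {q : Fin n → Fin s → ℝ} (hq : stressEnergy ω q = 0) :
    ∃ (T : Matrix (Fin s) (Fin r) ℝ) (b : Fin s → ℝ), ∀ i, q i = T *ᵥ p i + b := by
  have hcol (k : Fin s) : (fun i => q i k) ∈ LinearMap.range (affineEval p) := by
    refine hker (mulVec_eq_zero_of_sum_dotProduct_mulVec_eq_zero hpsd (fun k i => q i k) ?_ k)
    rw [stressEnergy_eq_sum_dotProduct hsymm hdiag, ← Finset.mul_sum] at hq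
    simpa using hq
  choose ac hac using hcol
  refine ⟨Matrix.of fun k => (ac k).1, fun k => (ac k).2, fun i => funext fun k => ?_⟩
  rw [← congrFun (hac k) i, affineEval_apply]
  rfl

lemma mulVec_sub_eq_zero_of_forall_mem_edges {E : Set (Fin n × Fin n)}
    {W : Matrix (Fin r) (Fin r) ℝ} (hW : W.IsSymm) (hdiag : ∀ i, ω i i = 0)
    (hsupp : ∀ i j, (i, j) ∉ E → ω i j = 0) (heq : ∀ i, ∑ j, ω i j • (p i - p j) = 0)
    (hker : LinearMap.ker (stressMatrix ω).mulVecLin ≤ LinearMap.range (affineEval p))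
    (hspan : ∀ i, affineSpan ℝ (insert (p i) (p '' {j | (i, j) ∈ E})) = ⊤)
    (hedge : ∀ i j, (i, j) ∈ E → (p i - p j) ⬝ᵥ W *ᵥ (p i - p j) = 0) :
    ∀ i j, W *ᵥ (p i - p j) = 0 := by
  set h : Fin n → ℝ := fun i => p i ⬝ᵥ W *ᵥ p i
  have hdiff (i j : Fin n) (hij : (i, j) ∈ E) : h j - h i = 2 * ((W *ᵥ p i) ⬝ᵥ (p j - p i)) :=
    dotProduct_mulVec_sub_of_isSymm hW (hedge i j hij)
  have hΩh : h ∈ LinearMap.ker (stressMatrix ω).mulVecLin := by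
    rw [LinearMap.mem_ker, mulVecLin_apply]
    funext i
    have hterm (j : Fin n) : ω i j * (h i - h j) = 2 * ((W *ᵥ p i) ⬝ᵥ (ω i j • (p i - p j))) := by
      by_cases hij : (i, j) ∈ E
      · rw [dotProduct_smul, smul_eq_mul, ← neg_sub (p j), dotProduct_neg]
        linear_combination (-ω i j) * hdiff i j hij
      · rw [hsupp i j hij, zero_smul, dotProduct_zero, zero_mul, mul_zero]
    rw [stressMatrix_mulVec_apply hdiag, Finset.sum_congr rfl fun j _ => hterm j,
      ← Finset.mul_sum, ← dotProduct_sum, heq i, dotProduct_zero, mul_zero, Pi.zero_apply]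
  obtain ⟨⟨c, d⟩, hcd⟩ := hker hΩh
  have hgrad (i : Fin n) : (2 : ℝ) • W *ᵥ p i = c := by
    rw [← sub_eq_zero]
    refine eq_zero_of_forall_dotProduct_sub_eq_zero (hspan i) (Set.mem_insert _ _) ?_
    rintro _ (rfl | ⟨j, hij, rfl⟩)
    · rw [sub_self, dotProduct_zero]
    · have hj : h j - h i = c ⬝ᵥ (p j - p i) := by
        rw [← hcd, affineEval_apply, affineEval_apply, dotProduct_sub]
        ring
      rw [sub_dotProduct, smul_dotProduct, smul_eq_mul, ← hdiff i j hij, hj, sub_self]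
  intro i j
  rw [mulVec_sub, ← smul_right_injective _ (two_ne_zero (α := ℝ)) |>.eq_iff, smul_sub,
    hgrad, hgrad, sub_self, smul_zero]

end Stress

theorem statement4_general {n r : ℕ}
    (E : Set (Fin n × Fin n)) (hG : TensegrityGraph E ∅ ∅)
    (p : Fin n → Fin r → ℝ)
    (hdim : affineSpan ℝ (Set.range p) = ⊤)
    (ω : Fin n → Fin n → ℝ)
    (hstress : IsStress E p ω)
    (hpsd : (stressMatrix ω).PosSemidef)
    (hrank : (stressMatrix ω).rank = n - r - 1)
    (hspan : ∀ i : Fin n,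
      affineSpan ℝ (insert (p i) (p '' {j | (i, j) ∈ E})) = ⊤) :
    UniversallyRigid E ∅ ∅ p := by
  obtain ⟨hsymm, hsupp, heq⟩ := hstress
  have hdiag (i : Fin n) : ω i i = 0 := hsupp i i fun hii => hG.2.2.2.1 i (Or.inl (Or.inl hii))
  have hker : LinearMap.ker (stressMatrix ω).mulVecLin ≤ LinearMap.range (affineEval p) :=
    (ker_mulVecLin_eq_range_affineEval hdim hrank (by
      rintro _ ⟨ac, rfl⟩
      exact stressMatrix_mulVec_affineEval hdiag heq ac)).le
  intro s q hdom
  have hbars := hdom.1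
  have henergy : stressEnergy ω q = 0 :=
    (stressEnergy_congr hsupp hbars).trans (stressEnergy_eq_zero hsymm hdiag heq)
  obtain ⟨T, b, hq⟩ := exists_eq_mulVec_add_of_stressEnergy_eq_zero hsymm hdiag hpsd hker henergy
  have hsq (i j : Fin n) : sqDist (q i) (q j) =
      sqDist (p i) (p j) + (p i - p j) ⬝ᵥ (Tᵀ * T - 1) *ᵥ (p i - p j) := by
    rw [hq, hq, sqDist_mulVec_add]
  have hW : (Tᵀ * T - 1).IsSymm := by
    simp [Matrix.IsSymm, transpose_sub, transpose_mul]
  have hflat := mulVec_sub_eq_zero_of_forall_mem_edges hW hdiag hsupp heq hker hspan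
    fun i j hij => by linarith [hsq i j, hbars (i, j) hij]
  intro i j
  rw [hsq, hflat, dotProduct_zero, add_zero]

/-- bar framework with PSD stress matrix of rank `n-r-1` such that each
point together with its neighbors affinely spans `ℝ^r` is universally rigid. -/
theorem statement4 {n r : ℕ} (hr : r ≤ n - 2)
    (E : Set (Fin n × Fin n)) (hG : TensegrityGraph E ∅ ∅)
    (p : Fin n → Fin r → ℝ)
    (hdim : affineSpan ℝ (Set.range p) = ⊤)
    (ω : Fin n → Fin n → ℝ)
    (hstress : IsStress E p ω)
    (hpsd : (stressMatrix ω).PosSemidef)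
    (hrank : (stressMatrix ω).rank = n - r - 1)
    (hspan : ∀ i : Fin n,
      affineSpan ℝ (insert (p i) (p '' {j | (i, j) ∈ E})) = ⊤) :
    UniversallyRigid E ∅ ∅ p :=
  statement4_general E hG p hdim ω hstress hpsd hrank hspan
end
end

section
/- Let (G,p) be an r-dimensional tensegrity framework in ℝ^r with configuration matrix P satisfying P^T e = 0. Then there exists a tensegrity framework (G,p') affinely-dominated by, but not congruent to, (G,p) if and only if there exists a non-zero symmetric r×r matrix Φ such that trace(F^{ij} P Φ P^T) = 0 for all bars {i,j} ∈ B, trace(F^{ij} P Φ P^T) ≤ 0 for all cables {i,j} ∈ C, and trace(F^{ij} P Φ P^T) ≥ 0 for all struts {i,j} ∈ S. -/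
open Matrix BigOperators

noncomputable section

lemma trace_Fmat_mul {n : ℕ} (i j : Fin n) (M : Matrix (Fin n) (Fin n) ℝ) :
    (Fmat i j * M).trace =
      (Pi.single i 1 - Pi.single j 1) ⬝ᵥ M *ᵥ (Pi.single i 1 - Pi.single j 1) := by
  rw [Fmat, vecMulVec_mul, trace_vecMulVec, dotProduct_comm, ← dotProduct_mulVec]

lemma transpose_of_mulVec_single_sub_single {n r : ℕ} (p : Fin n → Fin r → ℝ) (i j : Fin n) :
    (of p)ᵀ *ᵥ (Pi.single i 1 - Pi.single j 1) = p i - p j := by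
  ext k
  simp [mulVec_sub, mulVec_single]

lemma trace_Fmat_mul_gram {n r : ℕ} (p : Fin n → Fin r → ℝ) (Φ : Matrix (Fin r) (Fin r) ℝ)
    (i j : Fin n) :
    (Fmat i j * (of p * Φ * (of p)ᵀ)).trace = (p i - p j) ⬝ᵥ Φ *ᵥ (p i - p j) := by
  rw [trace_Fmat_mul, ← mulVec_mulVec, ← mulVec_mulVec, dotProduct_mulVec, ← mulVec_transpose,
    dotProduct_mulVec, ← dotProduct_mulVec, transpose_of_mulVec_single_sub_single]

lemma sqDist_mulVec_add_sub_sqDist {r : ℕ} (A : Matrix (Fin r) (Fin r) ℝ) (b x y : Fin r → ℝ) :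
    sqDist (A *ᵥ x + b) (A *ᵥ y + b) - sqDist x y = (x - y) ⬝ᵥ (Aᵀ * A - 1) *ᵥ (x - y) := by
  have hdiff : A *ᵥ x + b - (A *ᵥ y + b) = A *ᵥ (x - y) := by
    rw [mulVec_sub]; abel
  rw [sqDist_eq_dotProduct, sqDist_eq_dotProduct, hdiff, sub_mulVec, one_mulVec, ← mulVec_mulVec,
    dotProduct_sub (x - y) (Aᵀ *ᵥ _), dotProduct_mulVec (x - y) Aᵀ, vecMul_transpose]

lemma trace_Fmat_mul_gram_eq_sqDist_sub {n r : ℕ} {p q : Fin n → Fin r → ℝ}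
    {A : Matrix (Fin r) (Fin r) ℝ} {b : Fin r → ℝ} (hq : ∀ i, q i = A *ᵥ p i + b) (i j : Fin n) :
    (Fmat i j * (of p * (Aᵀ * A - 1) * (of p)ᵀ)).trace = sqDist (q i) (q j) - sqDist (p i) (p j) := by
  rw [trace_Fmat_mul_gram, hq, hq, sqDist_mulVec_add_sub_sqDist]

lemma LinearMap.BilinForm.eq_zero_of_apply_sub_self {K V : Type*} [Field K] [NeZero (2 : K)]
    [AddCommGroup V] [Module K V] {β : LinearMap.BilinForm K V} (hβ : β.IsSymm) {s : Set V}
    (hs : affineSpan K s = ⊤) (h : ∀ x ∈ s, ∀ y ∈ s, β (x - y) (x - y) = 0) : β = 0 := by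
  have hspan : Submodule.span K (s -ᵥ s) = ⊤ := by
    rw [← vectorSpan_def, AffineSubspace.vectorSpan_eq_top_of_affineSpan_eq_top _ _ _ hs]
  refine LinearMap.ext_on hspan ?_
  rintro _ ⟨x, hx, y, hy, rfl⟩
  refine LinearMap.ext_on hspan ?_
  rintro _ ⟨z, hz, w, hw, rfl⟩
  -- polarization: `2 β(x - y, z - w) = Q(x - w) + Q(y - z) - Q(x - z) - Q(y - w)`
  have htwice : (2 : K) * β (x - y) (z - w) = 0 := by
    have hxw := h x hx w hw
    have hyz := h y hy z hz
    have hxz := h x hx z hz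
    have hyw := h y hy w hw
    simp only [map_sub, LinearMap.sub_apply] at hxw hyz hxz hyw ⊢
    rw [hβ.eq z x, hβ.eq w x, hβ.eq z y, hβ.eq w y] at *
    linear_combination hxw + hyz - hxz - hyw
  simpa using (mul_eq_zero.mp htwice).resolve_left two_ne_zero

lemma eq_zero_of_trace_Fmat_mul_gram_eq_zero {n r : ℕ} {p : Fin n → Fin r → ℝ}
    (hdim : affineSpan ℝ (Set.range p) = ⊤) {Φ : Matrix (Fin r) (Fin r) ℝ} (hΦ : Φ.IsSymm)
    (h : ∀ i j, (Fmat i j * (of p * Φ * (of p)ᵀ)).trace = 0) : Φ = 0 := by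
  suffices Φ.toBilin' = 0 from Matrix.toBilin'.map_eq_zero_iff.mp this
  refine LinearMap.BilinForm.eq_zero_of_apply_sub_self (isSymm_toBilin'_iff_isSymm.mpr hΦ) hdim ?_
  rintro _ ⟨i, rfl⟩ _ ⟨j, rfl⟩
  rw [toBilin'_apply', ← trace_Fmat_mul_gram, h]

lemma abs_dotProduct_mulVec_self_le {r : ℕ} (Φ : Matrix (Fin r) (Fin r) ℝ) (x : Fin r → ℝ) :
    |x ⬝ᵥ Φ *ᵥ x| ≤ (∑ k, ∑ l, |Φ k l|) * (x ⬝ᵥ x) := by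
  have hsq : ∀ k, x k ^ 2 ≤ x ⬝ᵥ x := fun k => by
    simpa [dotProduct, sq] using
      Finset.single_le_sum (f := fun m => x m ^ 2) (fun m _ => sq_nonneg _) (Finset.mem_univ k)
  have hmul : ∀ k l, |x k * x l| ≤ x ⬝ᵥ x := fun k l => by
    rw [abs_le]
    constructor <;> nlinarith [hsq k, hsq l, sq_nonneg (x k + x l), sq_nonneg (x k - x l)]
  have hexpand : x ⬝ᵥ Φ *ᵥ x = ∑ k, ∑ l, Φ k l * (x k * x l) := by
    simp only [dotProduct, mulVec, Finset.mul_sum]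
    exact Finset.sum_congr rfl fun k _ => Finset.sum_congr rfl fun l _ => by ring
  rw [hexpand, Finset.sum_mul]
  refine (Finset.abs_sum_le_sum_abs _ _).trans (Finset.sum_le_sum fun k _ => ?_)
  rw [Finset.sum_mul]
  refine (Finset.abs_sum_le_sum_abs _ _).trans (Finset.sum_le_sum fun l _ => ?_)
  rw [abs_mul]
  exact mul_le_mul_of_nonneg_left (hmul k l) (abs_nonneg _)

lemma exists_pos_posSemidef_one_add_smul {r : ℕ} {Φ : Matrix (Fin r) (Fin r) ℝ}
    (hΦ : Φ.IsSymm) : ∃ t : ℝ, 0 < t ∧ (1 + t • Φ).PosSemidef := by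
  set M := ∑ k, ∑ l, |Φ k l|
  have hM : 0 ≤ M := Finset.sum_nonneg fun k _ => Finset.sum_nonneg fun l _ => abs_nonneg _
  refine ⟨1 / (M + 1), by positivity, posSemidef_iff_dotProduct_mulVec.2 ⟨?_, fun x => ?_⟩⟩
  · rw [IsHermitian, conjTranspose_eq_transpose_of_trivial, transpose_add, transpose_smul, hΦ.eq,
      transpose_one]
  · rw [star_trivial, add_mulVec, one_mulVec, dotProduct_add, smul_mulVec, dotProduct_smul,
      smul_eq_mul]
    have hbound := neg_le_of_abs_le (abs_dotProduct_mulVec_self_le Φ x)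
    have hxx : 0 ≤ x ⬝ᵥ x := dotProduct_self_star_nonneg x
    have hscaled : 1 / (M + 1) * (M * (x ⬝ᵥ x)) ≤ x ⬝ᵥ x := by
      rw [div_mul_eq_mul_div, one_mul, div_le_iff₀ (by positivity)]
      nlinarith
    nlinarith [mul_le_mul_of_nonneg_left hbound (by positivity : (0 : ℝ) ≤ 1 / (M + 1))]

lemma exists_transpose_mul_self_eq_one_add_smul {r : ℕ} {Φ : Matrix (Fin r) (Fin r) ℝ}
    (hΦ : Φ.IsSymm) : ∃ t : ℝ, 0 < t ∧ ∃ A : Matrix (Fin r) (Fin r) ℝ, Aᵀ * A = 1 + t • Φ := by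
  obtain ⟨t, ht, hpsd⟩ := exists_pos_posSemidef_one_add_smul hΦ
  open scoped MatrixOrder in
  obtain ⟨A, hA⟩ := CStarAlgebra.nonneg_iff_eq_star_mul_self.mp hpsd.nonneg
  exact ⟨t, ht, A, hA.symm⟩

theorem statement13_general {n r : ℕ}
    (B C S : Set (Fin n × Fin n))
    (p : Fin n → Fin r → ℝ)
    (hdim : affineSpan ℝ (Set.range p) = ⊤) :
    (∃ p' : Fin n → Fin r → ℝ,
        AffinelyDominated B C S p p' ∧ ¬ FrameworkCongruent p p') ↔
      ∃ Φ : Matrix (Fin r) (Fin r) ℝ, Φ ≠ 0 ∧ Φ.IsSymm ∧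
        (∀ e ∈ B,
          (Fmat e.1 e.2 * (Matrix.of p * Φ * (Matrix.of p)ᵀ)).trace = 0) ∧
        (∀ e ∈ C,
          (Fmat e.1 e.2 * (Matrix.of p * Φ * (Matrix.of p)ᵀ)).trace ≤ 0) ∧
        (∀ e ∈ S,
          0 ≤ (Fmat e.1 e.2 * (Matrix.of p * Φ * (Matrix.of p)ᵀ)).trace) := by
  constructor
  · rintro ⟨q, ⟨⟨hB, hC, hS⟩, A, b, hq⟩, hnc⟩
    have key := trace_Fmat_mul_gram_eq_sqDist_sub hq
    refine ⟨Aᵀ * A - 1, fun h0 => hnc fun i j => ?_, ?_, fun e he => ?_, fun e he => ?_,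
      fun e he => ?_⟩
    · simpa [h0, sub_eq_zero] using (key i j).symm
    · simp [IsSymm, transpose_sub, transpose_mul]
    · rw [key, sub_eq_zero, hB e he]
    · rw [key, sub_nonpos]; exact hC e he
    · rw [key, sub_nonneg]; exact hS e he
  · rintro ⟨Φ, hne, hΦ, hB, hC, hS⟩
    obtain ⟨t, ht, A, hA⟩ := exists_transpose_mul_self_eq_one_add_smul hΦ
    have key : ∀ i j, sqDist (A *ᵥ p i) (A *ᵥ p j) - sqDist (p i) (p j) =
        t * (Fmat i j * (of p * Φ * (of p)ᵀ)).trace := fun i j => by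
      rw [← trace_Fmat_mul_gram_eq_sqDist_sub (b := 0) (fun i => (add_zero _).symm), hA,
        add_sub_cancel_left]
      simp only [Matrix.mul_smul, Matrix.smul_mul, trace_smul, smul_eq_mul]
    obtain ⟨i, j, hij⟩ : ∃ i j, (Fmat i j * (of p * Φ * (of p)ᵀ)).trace ≠ 0 := by
      by_contra! h
      exact hne (eq_zero_of_trace_Fmat_mul_gram_eq_zero hdim hΦ h)
    refine ⟨fun i => A *ᵥ p i, ⟨⟨fun e he => ?_, fun e he => ?_, fun e he => ?_⟩,
      A, 0, fun i => (add_zero _).symm⟩, fun hc => hij ?_⟩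
    · have h := key e.1 e.2
      rwa [hB e he, mul_zero, sub_eq_zero] at h
    · nlinarith [key e.1 e.2, hC e he]
    · nlinarith [key e.1 e.2, hS e he]
    · have := key i j
      rw [hc i j, sub_self, zero_eq_mul] at this
      exact this.resolve_left ht.ne'

/-- there is a framework affinely-dominated by but not congruent to
`(G,p)` iff there is a non-zero symmetric `Φ` with `trace (F^{ij} P Φ Pᵀ)` zero on
bars, `≤ 0` on cables and `≥ 0` on struts. -/
theorem statement13 {n r : ℕ}
    (B C S : Set (Fin n × Fin n)) (hG : TensegrityGraph B C S)
    (p : Fin n → Fin r → ℝ)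
    (hdim : affineSpan ℝ (Set.range p) = ⊤)
    (hcentroid : ∀ k, ∑ i, p i k = 0) :
    (∃ p' : Fin n → Fin r → ℝ,
        AffinelyDominated B C S p p' ∧ ¬ FrameworkCongruent p p') ↔
      ∃ Φ : Matrix (Fin r) (Fin r) ℝ, Φ ≠ 0 ∧ Φ.IsSymm ∧
        (∀ e ∈ B,
          (Fmat e.1 e.2 * (Matrix.of p * Φ * (Matrix.of p)ᵀ)).trace = 0) ∧
        (∀ e ∈ C,
          (Fmat e.1 e.2 * (Matrix.of p * Φ * (Matrix.of p)ᵀ)).trace ≤ 0) ∧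
        (∀ e ∈ S,
          0 ≤ (Fmat e.1 e.2 * (Matrix.of p * Φ * (Matrix.of p)ᵀ)).trace) :=
  statement13_general B C S p hdim
end
end
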